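/- arXiv:2012.06076 — 2 statements merged into one kernel-verified Lean document; each statement's English description precedes it below -/
import Mathlib

section
/- Let x_1, ..., x_T ∈ ℝ^d with ‖x_t‖² ≤ κ², A_1 = I_d, A_{t+1} = A_t + x_t x_t^T. Then Σ_{t=1}^T min(x_t^T A_t^{-1} x_t, 1) ≤ 2 d ln(1 + Tκ²/d). -/
open Matrix Finset

/-!
By the matrix determinant lemma, `1 + x_tᵀ A_t⁻¹ x_t = det A_{t+1} / det A_t`, so after bounding
`min u 1 ≤ 2 log (1 + u)` the sum telescopes to `2 log det A_{T+1}`. The eigenvalues of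
`A_{T+1}` are positive with sum `tr A_{T+1} ≤ d + Tκ²`, and AM-GM bounds their product by
`(1 + Tκ²/d)^d`.
-/

theorem Real.prod_le_sum_div_card_pow {ι : Type*} (s : Finset ι) (z : ι → ℝ)
    (hz : ∀ i ∈ s, 0 ≤ z i) : ∏ i ∈ s, z i ≤ ((∑ i ∈ s, z i) / #s) ^ #s := by
  rcases s.eq_empty_or_nonempty with rfl | hs
  · simp
  have amgm := Real.geom_mean_le_arith_mean s 1 z (fun _ _ ↦ zero_le_one) (by simpa using hs) hz
  simp only [Pi.one_apply, Real.rpow_one, sum_const, nsmul_eq_mul, mul_one, one_mul] at amgm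
  calc ∏ i ∈ s, z i = ((∏ i ∈ s, z i) ^ ((#s : ℝ)⁻¹)) ^ #s :=
        (Real.rpow_inv_natCast_pow (prod_nonneg hz) hs.card_pos.ne').symm
    _ ≤ ((∑ i ∈ s, z i) / #s) ^ #s := by gcongr; exact Real.rpow_nonneg (prod_nonneg hz) _

theorem Matrix.PosSemidef.det_le_trace_div_card_pow {n : Type*} [Fintype n] [DecidableEq n]
    {B : Matrix n n ℝ} (hB : B.PosSemidef) : B.det ≤ (B.trace / Fintype.card n) ^ Fintype.card n := by
  rw [hB.isHermitian.det_eq_prod_eigenvalues, hB.isHermitian.trace_eq_sum_eigenvalues]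
  simpa using Real.prod_le_sum_div_card_pow univ _ fun i _ ↦ hB.eigenvalues_nonneg i

theorem Matrix.det_add_vecMulVec {n R : Type*} [Fintype n] [DecidableEq n] [CommRing R]
    {B : Matrix n n R} (hB : IsUnit B.det) (u v : n → R) :
    (B + vecMulVec u v).det = B.det * (1 + v ⬝ᵥ (B⁻¹ *ᵥ u)) := by
  rw [vecMulVec_eq Unit, det_add_replicateCol_mul_replicateRow hB, Matrix.mul_assoc,
    ← replicateCol_mulVec, det_unique (n := Unit)]
  simp [replicateRow_mul_replicateCol_apply]

theorem Real.min_le_two_mul_log_one_add {u : ℝ} (hu : 0 ≤ u) :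
    min u 1 ≤ 2 * Real.log (1 + u) := by
  have hu1 : 0 < 1 + u := by linarith
  calc min u 1 ≤ 2 * u / (1 + u) := by
        rw [le_div_iff₀ hu1]
        rcases le_total u 1 with h | h
        · rw [min_eq_left h]; nlinarith
        · rw [min_eq_right h]; linarith
    _ = 2 * (1 - (1 + u)⁻¹) := by field_simp; ring
    _ ≤ 2 * Real.log (1 + u) := by gcongr; exact Real.one_sub_inv_le_log_of_pos hu1

theorem Matrix.PosDef.dotProduct_inv_mulVec_nonneg {n : Type*} [Fintype n] [DecidableEq n]
    {B : Matrix n n ℝ} (hB : B.PosDef) (v : n → ℝ) : 0 ≤ v ⬝ᵥ (B⁻¹ *ᵥ v) := by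
  simpa using hB.inv.posSemidef.dotProduct_mulVec_nonneg v

section RankOneUpdates

variable {n : Type*} [Fintype n] {A : ℕ → Matrix n n ℝ} {x : ℕ → n → ℝ}

theorem posDef_of_rankOneUpdates (hA : ∀ t, A (t + 1) = A t + vecMulVec (x t) (x t))
    {s : ℕ} (hs : (A s).PosDef) {t : ℕ} (hst : s ≤ t) : (A t).PosDef := by
  induction t, hst using Nat.le_induction with
  | base => exact hs
  | succ t _ ih =>
    rw [hA]
    exact ih.add_posSemidef (by simpa using posSemidef_vecMulVec_self_star (x t))

theorem trace_rankOneUpdates (hA : ∀ t, A (t + 1) = A t + vecMulVec (x t) (x t)) (T : ℕ) :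
    (A (T + 1)).trace = (A 1).trace + ∑ t ∈ Icc 1 T, x t ⬝ᵥ x t := by
  induction T with
  | zero => simp
  | succ T ih => rw [sum_Icc_succ_top (by omega), hA, trace_add, ih, trace_vecMulVec, add_assoc]

theorem sum_log_one_add_eq_log_det_rankOneUpdates [DecidableEq n]
    (hA : ∀ t, A (t + 1) = A t + vecMulVec (x t) (x t)) (h1 : (A 1).PosDef) (T : ℕ) :
    ∑ t ∈ Icc 1 T, Real.log (1 + x t ⬝ᵥ ((A t)⁻¹ *ᵥ x t))
      = Real.log (A (T + 1)).det - Real.log (A 1).det := by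
  induction T with
  | zero => simp
  | succ T ih =>
    have hT := posDef_of_rankOneUpdates hA h1 (Nat.le_add_left 1 T)
    have hquad := hT.dotProduct_inv_mulVec_nonneg (x (T + 1))
    rw [sum_Icc_succ_top (by omega), ih, hA (T + 1), det_add_vecMulVec hT.det_pos.ne'.isUnit,
      Real.log_mul hT.det_pos.ne' (by positivity)]
    ring

end RankOneUpdates

theorem elliptical_potential_general (d T : ℕ) (κ : ℝ)
    (x : ℕ → Fin d → ℝ)
    (hx : ∀ t, 1 ≤ t → t ≤ T → ∑ i, (x t i) ^ 2 ≤ κ ^ 2)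
    (A : ℕ → Matrix (Fin d) (Fin d) ℝ)
    (hA1 : A 1 = 1)
    (hA : ∀ t, A (t + 1) = A t + Matrix.vecMulVec (x t) (x t)) :
    ∑ t ∈ Finset.Icc 1 T, min (x t ⬝ᵥ ((A t)⁻¹ *ᵥ x t)) 1
      ≤ 2 * d * Real.log (1 + T * κ ^ 2 / d) := by
  have hpos : ∀ t, 1 ≤ t → (A t).PosDef :=
    fun _ ↦ posDef_of_rankOneUpdates hA (hA1 ▸ PosDef.one)
  have htrace : (A (T + 1)).trace ≤ d + T * κ ^ 2 := by
    rw [trace_rankOneUpdates hA, hA1, trace_one, Fintype.card_fin]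
    gcongr
    calc ∑ t ∈ Icc 1 T, x t ⬝ᵥ x t ≤ ∑ t ∈ Icc 1 T, κ ^ 2 := sum_le_sum fun t ht ↦ by
          simpa [dotProduct, sq] using hx t (mem_Icc.1 ht).1 (mem_Icc.1 ht).2
      _ = T * κ ^ 2 := by simp
  have hdet : (A (T + 1)).det ≤ (1 + T * κ ^ 2 / d) ^ d := by
    have hT := hpos (T + 1) le_add_self
    calc (A (T + 1)).det ≤ ((A (T + 1)).trace / d) ^ d := by
          simpa using hT.posSemidef.det_le_trace_div_card_pow
      _ ≤ (1 + T * κ ^ 2 / d) ^ d := by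
          gcongr
          · exact div_nonneg hT.posSemidef.trace_nonneg d.cast_nonneg
          -- `d / d ≤ 1` rather than `= 1`, since `d` may be `0`
          calc (A (T + 1)).trace / d ≤ (d + T * κ ^ 2) / d := by gcongr
            _ ≤ 1 + T * κ ^ 2 / d := by rw [add_div]; gcongr; exact div_self_le_one _
  calc ∑ t ∈ Icc 1 T, min (x t ⬝ᵥ ((A t)⁻¹ *ᵥ x t)) 1
      ≤ ∑ t ∈ Icc 1 T, 2 * Real.log (1 + x t ⬝ᵥ ((A t)⁻¹ *ᵥ x t)) := sum_le_sum fun t ht ↦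
        Real.min_le_two_mul_log_one_add ((hpos t (mem_Icc.1 ht).1).dotProduct_inv_mulVec_nonneg _)
    _ = 2 * Real.log (A (T + 1)).det := by
        rw [← mul_sum, sum_log_one_add_eq_log_det_rankOneUpdates hA (hpos 1 le_rfl), hA1, det_one,
          Real.log_one, sub_zero]
    _ ≤ 2 * Real.log ((1 + T * κ ^ 2 / d) ^ d) := by
        gcongr
        exact (hpos (T + 1) le_add_self).det_pos
    _ = 2 * d * Real.log (1 + T * κ ^ 2 / d) := by rw [Real.log_pow]; ring

/-- Elliptical potential lemma: with `A_1 = I_d`, `A_{t+1} = A_t + x_t x_tᵀ` and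
`‖x_t‖² ≤ κ²`, we have `Σ_{t=1}^T min(x_tᵀ A_t⁻¹ x_t, 1) ≤ 2 d ln(1 + Tκ²/d)`. -/
theorem elliptical_potential (d T : ℕ) (hd : 0 < d) (κ : ℝ)
    (x : ℕ → Fin d → ℝ)
    (hx : ∀ t, 1 ≤ t → t ≤ T → ∑ i, (x t i) ^ 2 ≤ κ ^ 2)
    (A : ℕ → Matrix (Fin d) (Fin d) ℝ)
    (hA1 : A 1 = 1)
    (hA : ∀ t, A (t + 1) = A t + Matrix.vecMulVec (x t) (x t)) :
    ∑ t ∈ Finset.Icc 1 T, min (x t ⬝ᵥ ((A t)⁻¹ *ᵥ x t)) 1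
      ≤ 2 * d * Real.log (1 + T * κ ^ 2 / d) :=
  elliptical_potential_general d T κ x hx A hA1 hA
end

section
/- Let x_1, ..., x_T ∈ ℝ^d with ‖x_t‖² ≤ κ², A_t = I_d + Σ_{τ<t} x_τ x_τ^T. Then for each t, Σ_{τ=1}^{t-1} |x_t^T A_t^{-1} x_τ| ≤ sqrt(t · x_t^T A_t^{-1} x_t). -/
/-!
Put `w = A⁻¹ x_t`. Since `A⁻¹` is symmetric, `x_tᵀ A⁻¹ x_τ = wᵀ x_τ`, and
`Σ_τ (wᵀ x_τ)² = wᵀ (Σ_τ x_τ x_τᵀ) w ≤ wᵀ A w = x_tᵀ A⁻¹ x_t`.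
Cauchy–Schwarz over the `t - 1 ≤ t` indices `τ` then bounds the sum of the absolute values.
-/

open Matrix Finset

theorem Finset.sum_abs_le_sqrt_card_mul_sum_sq {ι : Type*} (s : Finset ι) (f : ι → ℝ) :
    ∑ i ∈ s, |f i| ≤ √(#s * ∑ i ∈ s, f i ^ 2) := by
  refine Real.le_sqrt_of_sq_le ?_
  simpa only [sq_abs] using sq_sum_le_card_mul_sum_sq (s := s) (f := fun i => |f i|)

namespace Matrix

variable {n ι : Type*} [Fintype n]

theorem dotProduct_sum_vecMulVec_self_mulVec (s : Finset ι) (x : ι → n → ℝ) (w : n → ℝ) :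
    w ⬝ᵥ ((∑ i ∈ s, vecMulVec (x i) (x i)) *ᵥ w) = ∑ i ∈ s, (w ⬝ᵥ x i) ^ 2 := by
  simp only [sum_mulVec, vecMulVec_mulVec, op_smul_eq_smul, dotProduct_sum, dotProduct_smul,
    smul_eq_mul]
  exact sum_congr rfl fun i _ => by rw [dotProduct_comm (x i), sq]

theorem posSemidef_sum_vecMulVec_self (s : Finset ι) (x : ι → n → ℝ) :
    (∑ i ∈ s, vecMulVec (x i) (x i)).PosSemidef :=
  posSemidef_sum s fun i _ => by simpa using posSemidef_vecMulVec_self_star (x i)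

variable [DecidableEq n]

theorem sum_sq_dotProduct_inv_mulVec_le {A : Matrix n n ℝ} (hA : A.PosDef) {s : Finset ι}
    {x : ι → n → ℝ} (hAx : (A - ∑ i ∈ s, vecMulVec (x i) (x i)).PosSemidef) (v : n → ℝ) :
    ∑ i ∈ s, (v ⬝ᵥ (A⁻¹ *ᵥ x i)) ^ 2 ≤ v ⬝ᵥ (A⁻¹ *ᵥ v) := by
  set w := A⁻¹ *ᵥ v
  have hsymm : (A⁻¹)ᵀ = A⁻¹ := by
    simpa [conjTranspose_eq_transpose_of_trivial] using hA.inv.isHermitian.eq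
  have hw : ∀ u, v ⬝ᵥ (A⁻¹ *ᵥ u) = w ⬝ᵥ u := fun u => by
    rw [dotProduct_mulVec, ← mulVec_transpose, hsymm]
  have hAw : A *ᵥ w = v := by
    rw [mulVec_mulVec, mul_nonsing_inv _ ((isUnit_iff_isUnit_det A).mp hA.isUnit), one_mulVec]
  have hgap := hAx.dotProduct_mulVec_nonneg w
  rw [star_trivial, sub_mulVec, dotProduct_sub, sub_nonneg] at hgap
  calc ∑ i ∈ s, (v ⬝ᵥ (A⁻¹ *ᵥ x i)) ^ 2 = ∑ i ∈ s, (w ⬝ᵥ x i) ^ 2 := by simp only [hw]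
    _ = w ⬝ᵥ ((∑ i ∈ s, vecMulVec (x i) (x i)) *ᵥ w) :=
        (dotProduct_sum_vecMulVec_self_mulVec s x w).symm
    _ ≤ w ⬝ᵥ (A *ᵥ w) := hgap
    _ = v ⬝ᵥ (A⁻¹ *ᵥ v) := by rw [hAw, dotProduct_comm]

end Matrix

theorem cross_term_bound_general (d T : ℕ) (x : ℕ → Fin d → ℝ)
    (A : ℕ → Matrix (Fin d) (Fin d) ℝ)
    (hA : ∀ t, A t = 1 + ∑ τ ∈ Finset.Icc 1 (t - 1), Matrix.vecMulVec (x τ) (x τ)) :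
    ∀ t, 1 ≤ t → t ≤ T →
      ∑ τ ∈ Finset.Icc 1 (t - 1), |x t ⬝ᵥ ((A t)⁻¹ *ᵥ x τ)|
        ≤ Real.sqrt (t * (x t ⬝ᵥ ((A t)⁻¹ *ᵥ x t))) := by
  intro t _ _
  set G := ∑ τ ∈ Finset.Icc 1 (t - 1), vecMulVec (x τ) (x τ)
  have hApos : (A t).PosDef := by
    rw [hA t]; exact PosDef.one.add_posSemidef (posSemidef_sum_vecMulVec_self _ x)
  have hAG : (A t - G).PosSemidef := by
    rw [hA t, add_sub_cancel_right]; exact PosSemidef.one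
  have hcard : (#(Finset.Icc 1 (t - 1)) : ℝ) ≤ t := by
    rw [Nat.card_Icc]; exact_mod_cast (by omega : t - 1 + 1 - 1 ≤ t)
  calc _ ≤ √(#(Finset.Icc 1 (t - 1)) *
          ∑ τ ∈ Finset.Icc 1 (t - 1), (x t ⬝ᵥ ((A t)⁻¹ *ᵥ x τ)) ^ 2) :=
        sum_abs_le_sqrt_card_mul_sum_sq _ _
    _ ≤ √(t * (x t ⬝ᵥ ((A t)⁻¹ *ᵥ x t))) := by
        gcongr
        exact sum_sq_dotProduct_inv_mulVec_le hApos hAG (x t)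

/-- With `A_t = I_d + Σ_{τ<t} x_τ x_τᵀ` and `‖x_t‖² ≤ κ²`, for each `t`,
`Σ_{τ=1}^{t-1} |x_tᵀ A_t⁻¹ x_τ| ≤ sqrt(t · x_tᵀ A_t⁻¹ x_t)`. -/
theorem cross_term_bound (d T : ℕ) (κ : ℝ) (x : ℕ → Fin d → ℝ)
    (hx : ∀ t, 1 ≤ t → t ≤ T → ∑ i, (x t i) ^ 2 ≤ κ ^ 2)
    (A : ℕ → Matrix (Fin d) (Fin d) ℝ)
    (hA : ∀ t, A t = 1 + ∑ τ ∈ Finset.Icc 1 (t - 1), Matrix.vecMulVec (x τ) (x τ)) :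
    ∀ t, 1 ≤ t → t ≤ T →
      ∑ τ ∈ Finset.Icc 1 (t - 1), |x t ⬝ᵥ ((A t)⁻¹ *ᵥ x τ)|
        ≤ Real.sqrt (t * (x t ⬝ᵥ ((A t)⁻¹ *ᵥ x t))) :=
  cross_term_bound_general d T x A hA
end
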